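/- arXiv:math/9801026 — 2 statements merged into one kernel-verified Lean document; each statement's English description precedes it below -/
import Mathlib

section
/- If f : ℝ → ℝ is C² and f(t) ≥ 0 for all t, then there exists a C¹ function x : ℝ → ℝ with x(t)² = f(t) for all t. -/
/-!
Away from the zeros of `f`, `±√f` is `C¹`. At a zero `z` we have `f' z = 0`, so Taylor's formula
gives `√(f t) ~ √(f'' z / 2) * |t - z|`. At a nondegenerate zero (`f'' z > 0`, necessarily
isolated) the root must therefore change sign; at a degenerate one (`f'' z = 0`) we get
`√f = o(t - z)`, and Glaeser's inequality `|f'| ≤ √(2 f sup f'')` makes `f' / (2√f)` tend to `0`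
whatever the signs. So `x = σ √f` works for any sign `σ` that flips exactly at the nondegenerate
zeros. These may accumulate at degenerate zeros, so `σ` is normalised separately on each class of
points separated by finitely many of them, and the flips are counted by parity.
-/

open Set Filter Topology Interval

section SignFlip

variable {α : Type*} [LinearOrder α]

theorem Set.disjoint_uIoc_uIoc {a b c : α} (h : b ∈ [[a, c]]) : Disjoint (Ι a b) (Ι b c) := by
  refine Set.disjoint_left.2 fun x hab hbc => ?_
  simp only [mem_uIoc, mem_uIcc] at h hab hbc
  grind

theorem Set.uIoc_subset_uIoc_union_uIoc {a b c : α} : Ι a c ⊆ Ι a b ∪ Ι b c := by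
  intro x hx
  simp only [mem_union, mem_uIoc] at hx ⊢
  grind

theorem Set.Finite.inter_uIoc_trans {S : Set α} {a b c : α} (hab : (S ∩ Ι a b).Finite)
    (hbc : (S ∩ Ι b c).Finite) : (S ∩ Ι a c).Finite :=
  (hab.union hbc).subset <| by
    rw [← inter_union_distrib_left]
    exact inter_subset_inter_right _ uIoc_subset_uIoc_union_uIoc

noncomputable def crossingSign (S : Set α) (s t : α) : ℝ := (-1) ^ (S ∩ Ι s t).ncard

variable {S : Set α}

theorem crossingSign_comm (s t : α) : crossingSign S s t = crossingSign S t s := by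
  rw [crossingSign, crossingSign, uIoc_comm]

theorem crossingSign_mul_self (s t : α) : crossingSign S s t * crossingSign S s t = 1 := by
  rw [crossingSign, ← pow_add, Even.neg_one_pow ⟨_, rfl⟩]

theorem crossingSign_mul_of_mem_uIcc {a b c : α} (h : b ∈ [[a, c]])
    (hab : (S ∩ Ι a b).Finite) (hbc : (S ∩ Ι b c).Finite) :
    crossingSign S a b * crossingSign S b c = crossingSign S a c := by
  rw [crossingSign, crossingSign, crossingSign, ← pow_add, ← ncard_union_eq _ hab hbc,
    ← inter_union_distrib_left, uIoc_union_uIoc h]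
  exact (disjoint_uIoc_uIoc h).mono inter_subset_right inter_subset_right

theorem crossingSign_mul {a b c : α} (hab : (S ∩ Ι a b).Finite) (hbc : (S ∩ Ι b c).Finite) :
    crossingSign S a b * crossingSign S b c = crossingSign S a c := by
  have hac := hab.inter_uIoc_trans hbc
  have hba : (S ∩ Ι b a).Finite := by rwa [uIoc_comm]
  have hcb : (S ∩ Ι c b).Finite := by rwa [uIoc_comm]
  have : b ∈ [[a, c]] ∨ a ∈ [[b, c]] ∨ c ∈ [[a, b]] := by simp only [mem_uIcc]; grind
  rcases this with h | h | h
  · exact crossingSign_mul_of_mem_uIcc h hab hbc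
  · rw [← crossingSign_mul_of_mem_uIcc h hba hac, crossingSign_comm b a, ← mul_assoc,
      crossingSign_mul_self, one_mul]
  · rw [← crossingSign_mul_of_mem_uIcc h hac hcb, crossingSign_comm c b, mul_assoc,
      crossingSign_mul_self, mul_one]

variable (S) in
def finiteCrossingSetoid : Setoid α where
  r s t := (S ∩ Ι s t).Finite
  iseqv :=
    { refl := fun t => by simp
      symm := fun h => by rwa [uIoc_comm]
      trans := Set.Finite.inter_uIoc_trans }

variable (S) in
def IsSignFlipping (σ : α → ℝ) : Prop :=
  (∀ t, |σ t| = 1) ∧ ∀ s t, (S ∩ Ι s t).Finite → σ t = crossingSign S s t * σ s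

variable (S) in
theorem exists_isSignFlipping : ∃ σ, IsSignFlipping S σ := by
  let rep (t : α) := (Quotient.mk (finiteCrossingSetoid S) t).out
  refine ⟨fun t => crossingSign S (rep t) t, fun t => by simp [crossingSign], fun s t hst => ?_⟩
  have hrep : rep t = rep s := congrArg Quotient.out (Quotient.sound hst).symm
  dsimp only
  rw [hrep, ← crossingSign_mul (Quotient.mk_out (s := finiteCrossingSetoid S) s) hst, mul_comm]

theorem IsSignFlipping.eq_of_inter_uIoc_eq_empty {σ : α → ℝ} (hσ : IsSignFlipping S σ)
    {s t : α} (h : S ∩ Ι s t = ∅) : σ t = σ s := by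
  rw [hσ.2 s t (h ▸ finite_empty), crossingSign, h, ncard_empty, pow_zero, one_mul]

theorem IsSignFlipping.eq_neg_of_inter_uIoc_eq_singleton {σ : α → ℝ} (hσ : IsSignFlipping S σ)
    {s t z : α} (h : S ∩ Ι s t = {z}) : σ t = -σ s := by
  rw [hσ.2 s t (h ▸ finite_singleton z), crossingSign, h, ncard_singleton, pow_one, neg_one_mul]

end SignFlip

theorem eventually_inter_uIoc_subset_singleton {S : Set ℝ} {z : ℝ}
    (hS : ∀ᶠ t in 𝓝[≠] z, t ∉ S) : ∀ᶠ t in 𝓝 z, S ∩ Ι z t ⊆ {z} := by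
  rw [eventually_nhdsWithin_iff] at hS
  obtain ⟨l, u, hz, hsub⟩ := mem_nhds_iff_exists_Ioo_subset.1 hS
  filter_upwards [Ioo_mem_nhds hz.1 hz.2] with t ht x ⟨hxS, hx⟩
  by_contra hxz
  exact hsub (ordConnected_Ioo.uIcc_subset hz ht (uIoc_subset_uIcc hx)) hxz hxS

namespace IsSignFlipping

variable {S : Set ℝ} {σ : ℝ → ℝ}

theorem eventuallyEq_const (hσ : IsSignFlipping S σ) {z : ℝ} (hS : ∀ᶠ t in 𝓝 z, t ∉ S) :
    σ =ᶠ[𝓝 z] fun _ => σ z := by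
  have hzS : z ∉ S := hS.self_of_nhds
  filter_upwards [eventually_inter_uIoc_subset_singleton (hS.filter_mono nhdsWithin_le_nhds)]
    with t ht
  refine hσ.eq_of_inter_uIoc_eq_empty (subset_empty_iff.1 fun x hx => hzS ?_)
  obtain rfl := ht hx
  exact hx.1

theorem eventually_mul_abs_sub_eq (hσ : IsSignFlipping S σ) {z : ℝ} (hz : z ∈ S)
    (hS : ∀ᶠ t in 𝓝[≠] z, t ∉ S) : ∀ᶠ t in 𝓝 z, σ t * |t - z| = σ z * (t - z) := by
  filter_upwards [eventually_inter_uIoc_subset_singleton hS] with t ht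
  rcases le_or_gt z t with hzt | htz
  · have : S ∩ Ι z t = ∅ := subset_empty_iff.1 fun x hx => by
      obtain rfl := ht hx
      exact (left_mem_uIoc.1 hx.2).not_ge hzt
    rw [hσ.eq_of_inter_uIoc_eq_empty this, abs_of_nonneg (sub_nonneg.2 hzt)]
  · have : S ∩ Ι z t = {z} := ht.antisymm (singleton_subset_iff.2 ⟨hz, left_mem_uIoc.2 htz⟩)
    rw [hσ.eq_neg_of_inter_uIoc_eq_singleton this, abs_of_neg (sub_neg.2 htz)]
    ring

end IsSignFlipping

section NonnegC2

variable {f : ℝ → ℝ}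

theorem exists_taylor_two_lagrange (hf : ContDiff ℝ 2 f) (a b : ℝ) :
    ∃ ξ ∈ [[a, b]], f b = f a + deriv f a * (b - a) + iteratedDeriv 2 f ξ / 2 * (b - a) ^ 2 := by
  rcases eq_or_ne a b with rfl | hab
  · exact ⟨a, left_mem_uIcc, by simp⟩
  obtain ⟨ξ, hξ, h⟩ := taylor_mean_remainder_lagrange_iteratedDeriv (n := 1) hab hf.contDiffOn
  refine ⟨ξ, Ioo_subset_Icc_self hξ, ?_⟩
  have hderiv : derivWithin f [[a, b]] a = deriv f a :=
    (hf.differentiable two_ne_zero a).derivWithin (uniqueDiffOn_uIcc hab a left_mem_uIcc)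
  rw [taylorWithinEval_succ, taylor_within_zero_eval, iteratedDerivWithin_one, hderiv] at h
  simp only [CharP.cast_eq_zero, zero_add, Nat.factorial_zero, Nat.cast_one, mul_one, inv_one,
    pow_one, one_mul, smul_eq_mul, Nat.reduceAdd, Nat.factorial_two, Nat.cast_ofNat] at h
  linarith

-- Glaeser's inequality, in local form.
theorem abs_deriv_mul_le_of_nonneg (hf : ContDiff ℝ 2 f) {t h M : ℝ} (hh : 0 ≤ h)
    (hpos : ∀ s ∈ Icc (t - h) (t + h), 0 ≤ f s)
    (hM : ∀ s ∈ Icc (t - h) (t + h), iteratedDeriv 2 f s ≤ M) :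
    |deriv f t| * h ≤ f t + M / 2 * h ^ 2 := by
  have key : ∀ e, |e| = h → 0 ≤ f t + deriv f t * e + M / 2 * h ^ 2 := by
    intro e he
    have hIcc : [[t, t + e]] ⊆ Icc (t - h) (t + h) := by
      rw [← he]
      exact uIcc_subset_Icc ⟨by linarith [abs_nonneg e], by linarith [abs_nonneg e]⟩
        ⟨by linarith [neg_abs_le e], by linarith [le_abs_self e]⟩
    obtain ⟨ξ, hξ, heq⟩ := exists_taylor_two_lagrange hf t (t + e)
    have hfe := hpos _ (hIcc right_mem_uIcc)
    have hMξ := hM ξ (hIcc hξ)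
    rw [heq, add_sub_cancel_left, ← sq_abs e, he] at hfe
    nlinarith [sq_nonneg h]
  have habs : |deriv f t| * h = |deriv f t * h| := by rw [abs_mul, abs_of_nonneg hh]
  rw [habs, abs_le]
  constructor
  · linarith [key h (abs_of_nonneg hh)]
  · linarith [key (-h) (by rw [abs_neg, abs_of_nonneg hh])]

theorem tendsto_div_sq_sub (hf : ContDiff ℝ 2 f) {z : ℝ} (hz : f z = 0) (hz' : deriv f z = 0) :
    Tendsto (fun t => f t / (t - z) ^ 2) (𝓝[≠] z) (𝓝 (iteratedDeriv 2 f z / 2)) := by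
  have h : Tendsto (fun t => (f t - iteratedDeriv 2 f z / 2 * (t - z) ^ 2) / (t - z) ^ 2)
      (𝓝 z) (𝓝 0) := by
    simpa [taylorWithinEval_succ, hz, hz', one_add_one_eq_two, div_eq_inv_mul, mul_comm,
      mul_left_comm] using (taylor_isLittleO_univ (x₀ := z) hf).tendsto_div_nhds_zero
  have h' := (h.mono_left (nhdsWithin_le_nhds (s := {z}ᶜ))).add_const (iteratedDeriv 2 f z / 2)
  rw [zero_add] at h'
  refine h'.congr' (eventually_nhdsWithin_of_forall fun t ht => ?_)
  field_simp [sub_ne_zero.2 ht]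
  ring

theorem tendsto_deriv_div_sub (hf : ContDiff ℝ 2 f) {z : ℝ} (hz' : deriv f z = 0) :
    Tendsto (fun t => deriv f t / (t - z)) (𝓝[≠] z) (𝓝 (iteratedDeriv 2 f z)) := by
  have h : HasDerivAt (deriv f) (iteratedDeriv 2 f z) z := by
    simpa [iteratedDeriv_succ] using
      (hf.differentiable_iteratedDeriv 1 (by norm_num) z).hasDerivAt
  refine (hasDerivAt_iff_tendsto_slope.1 h).congr fun t => ?_
  rw [slope_def_field, hz', sub_zero]

theorem deriv_eq_zero_of_nonneg (hpos : ∀ t, 0 ≤ f t) {z : ℝ} (hz : f z = 0) : deriv f z = 0 :=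
  IsLocalMin.deriv_eq_zero (Eventually.of_forall fun t => hz ▸ hpos t)

theorem iteratedDeriv_two_nonneg_of_nonneg (hf : ContDiff ℝ 2 f) (hpos : ∀ t, 0 ≤ f t) {z : ℝ}
    (hz : f z = 0) : 0 ≤ iteratedDeriv 2 f z := by
  have := ge_of_tendsto (tendsto_div_sq_sub hf hz (deriv_eq_zero_of_nonneg hpos hz))
    (Eventually.of_forall fun t => div_nonneg (hpos t) (sq_nonneg (t - z)))
  linarith

theorem tendsto_sqrt_div_abs_sub (hf : ContDiff ℝ 2 f) (hpos : ∀ t, 0 ≤ f t) {z : ℝ}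
    (hz : f z = 0) :
    Tendsto (fun t => √(f t) / |t - z|) (𝓝[≠] z) (𝓝 √(iteratedDeriv 2 f z / 2)) :=
  (tendsto_div_sq_sub hf hz (deriv_eq_zero_of_nonneg hpos hz)).sqrt.congr fun t => by
    rw [Real.sqrt_div' _ (sq_nonneg _), Real.sqrt_sq_eq_abs]

end NonnegC2

def nondegenerateZeros (f : ℝ → ℝ) : Set ℝ := {z | f z = 0 ∧ 0 < iteratedDeriv 2 f z}

noncomputable def signedSqrt (σ f : ℝ → ℝ) (t : ℝ) : ℝ := σ t * √(f t)

-- At a zero `t` of `f`, `√f` grows like `√(f'' t / 2) * |s - t|`.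
noncomputable def signedSqrtDeriv (σ f : ℝ → ℝ) (t : ℝ) : ℝ :=
  σ t * if f t = 0 then √(iteratedDeriv 2 f t / 2) else deriv f t / (2 * √(f t))

section SignedSqrt

variable {σ f : ℝ → ℝ} {t z : ℝ}

theorem sq_signedSqrt (hσ : |σ t| = 1) (ht : 0 ≤ f t) : signedSqrt σ f t ^ 2 = f t := by
  rw [signedSqrt, mul_pow, ← sq_abs, hσ, one_pow, one_mul, Real.sq_sqrt ht]

theorem hasDerivAt_signedSqrt_of_pos (hσ : σ =ᶠ[𝓝 t] fun _ => σ t)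
    (hf : DifferentiableAt ℝ f t) (ht : 0 < f t) :
    HasDerivAt (signedSqrt σ f) (signedSqrtDeriv σ f t) t := by
  rw [signedSqrtDeriv, if_neg ht.ne']
  refine (hf.hasDerivAt.sqrt ht.ne' |>.const_mul (σ t)).congr_of_eventuallyEq ?_
  filter_upwards [hσ] with s hs
  rw [signedSqrt, hs]

theorem continuousAt_signedSqrtDeriv_of_pos (hσ : σ =ᶠ[𝓝 t] fun _ => σ t)
    (hf : ContDiff ℝ 1 f) (ht : 0 < f t) : ContinuousAt (signedSqrtDeriv σ f) t := by
  have hcont : ContinuousAt (fun s => σ t * (deriv f s / (2 * √(f s)))) t :=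
    continuousAt_const.mul <| (hf.continuous_deriv le_rfl).continuousAt.div
      (continuousAt_const.mul hf.continuous.continuousAt.sqrt) (by positivity)
  refine hcont.congr ?_
  filter_upwards [hσ, hf.continuous.continuousAt.eventually_ne ht.ne'] with s hs hs'
  rw [signedSqrtDeriv, if_neg hs', hs]

theorem hasDerivAt_signedSqrt_of_flip (hf : ContDiff ℝ 2 f) (hpos : ∀ t, 0 ≤ f t)
    (hz : f z = 0) (hσ : ∀ᶠ t in 𝓝 z, σ t * |t - z| = σ z * (t - z)) :
    HasDerivAt (signedSqrt σ f) (signedSqrtDeriv σ f z) z := by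
  rw [hasDerivAt_iff_tendsto_slope, signedSqrtDeriv, if_pos hz]
  refine ((tendsto_sqrt_div_abs_sub hf hpos hz).const_mul (σ z)).congr' ?_
  filter_upwards [self_mem_nhdsWithin, hσ.filter_mono nhdsWithin_le_nhds] with t ht hσt
  have htz : t - z ≠ 0 := sub_ne_zero.2 ht
  rw [slope_def_field, signedSqrt, signedSqrt, hz, Real.sqrt_zero, mul_zero, sub_zero]
  field_simp [abs_ne_zero.2 htz]
  linear_combination √(f t) * hσt.symm

theorem continuousAt_signedSqrtDeriv_of_flip (hf : ContDiff ℝ 2 f) (hpos : ∀ t, 0 ≤ f t)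
    (hz : f z = 0) (h2 : 0 < iteratedDeriv 2 f z)
    (hσ : ∀ᶠ t in 𝓝 z, σ t * |t - z| = σ z * (t - z)) :
    ContinuousAt (signedSqrtDeriv σ f) z := by
  set c := iteratedDeriv 2 f z
  have hc : 0 < √(c / 2) := Real.sqrt_pos.2 (half_pos h2)
  have hsqrt := tendsto_sqrt_div_abs_sub hf hpos hz
  have hlim := ((tendsto_deriv_div_sub hf (deriv_eq_zero_of_nonneg hpos hz)).div
    (hsqrt.const_mul 2) (by positivity)).const_mul (σ z)
  have hval : c / (2 * √(c / 2)) = √(c / 2) := by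
    rw [div_eq_iff (by positivity)]
    nlinarith [Real.sq_sqrt (half_pos h2).le]
  rw [hval] at hlim
  rw [← continuousWithinAt_compl_self, ContinuousWithinAt, signedSqrtDeriv, if_pos hz]
  refine hlim.congr' ?_
  filter_upwards [self_mem_nhdsWithin, hσ.filter_mono nhdsWithin_le_nhds,
    hsqrt.eventually (lt_mem_nhds hc)] with t ht hσt hpos_t
  have htz : t - z ≠ 0 := sub_ne_zero.2 ht
  have hsq : 0 < √(f t) := (div_pos_iff_of_pos_right (abs_pos.2 htz)).1 hpos_t
  have hσt' : σ t * (t - z) = σ z * |t - z| := by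
    refine mul_right_cancel₀ (abs_ne_zero.2 htz) ?_
    linear_combination (t - z) * hσt - σ z * abs_mul_abs_self (t - z)
  rw [signedSqrtDeriv, if_neg (Real.sqrt_pos.1 hsq).ne', Pi.div_apply]
  field_simp [abs_ne_zero.2 htz]
  linear_combination -(deriv f t * hσt')

theorem hasDerivAt_signedSqrt_of_degenerate (hσ : ∀ t, |σ t| = 1) (hf : ContDiff ℝ 2 f)
    (hpos : ∀ t, 0 ≤ f t) (hz : f z = 0) (h2 : iteratedDeriv 2 f z = 0) :
    HasDerivAt (signedSqrt σ f) (signedSqrtDeriv σ f z) z := by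
  have hlim := tendsto_sqrt_div_abs_sub hf hpos hz
  rw [h2, zero_div, Real.sqrt_zero] at hlim
  rw [hasDerivAt_iff_tendsto_slope, signedSqrtDeriv, if_pos hz, h2, zero_div, Real.sqrt_zero,
    mul_zero, tendsto_zero_iff_norm_tendsto_zero]
  refine hlim.congr fun t => ?_
  rw [slope_def_field, signedSqrt, signedSqrt, hz, Real.sqrt_zero, mul_zero, sub_zero,
    Real.norm_eq_abs, abs_div, abs_mul, hσ, one_mul, abs_of_nonneg (Real.sqrt_nonneg _)]

theorem abs_signedSqrtDeriv_le (hσ : |σ t| = 1) (hf : ContDiff ℝ 2 f) (hpos : ∀ s, 0 ≤ f s)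
    {δ ε : ℝ} (hε : 0 < ε) (hδ : 2 * √(f t) ≤ ε * δ)
    (hM : ∀ s ∈ Icc (t - δ) (t + δ), iteratedDeriv 2 f s ≤ ε ^ 2) :
    |signedSqrtDeriv σ f t| ≤ ε := by
  rw [signedSqrtDeriv, abs_mul, hσ, one_mul]
  split_ifs with ht
  · have hδ0 : 0 ≤ δ := by nlinarith [Real.sqrt_nonneg (f t)]
    have hMt := hM t ⟨by linarith, by linarith⟩
    have h2 := iteratedDeriv_two_nonneg_of_nonneg hf hpos ht
    rw [abs_of_nonneg (Real.sqrt_nonneg _), ← Real.sqrt_sq hε.le]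
    exact Real.sqrt_le_sqrt (by linarith)
  · have hq : 0 < √(f t) := Real.sqrt_pos.2 ((hpos t).lt_of_ne' ht)
    have hfq : f t = √(f t) ^ 2 := (Real.sq_sqrt (hpos t)).symm
    set q := √(f t)
    have hh : 2 * q / ε ≤ δ := (div_le_iff₀ hε).2 (by linarith)
    have hG := abs_deriv_mul_le_of_nonneg (t := t) (h := 2 * q / ε) hf (div_nonneg (by linarith) hε.le)
      (fun s _ => hpos s) fun s hs => hM s (Icc_subset_Icc (by linarith) (by linarith) hs)
    rw [abs_div, abs_of_pos (by linarith : 0 < 2 * q), div_le_iff₀ (by linarith)]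
    have h3 : |deriv f t| * 2 ≤ 3 * q * ε := by
      have := mul_le_mul_of_nonneg_right hG hε.le
      rw [hfq] at this
      field_simp at this
      linarith
    linarith [mul_pos hq hε]

theorem continuousAt_signedSqrtDeriv_of_degenerate (hσ : ∀ t, |σ t| = 1)
    (hf : ContDiff ℝ 2 f) (hpos : ∀ t, 0 ≤ f t) (hz : f z = 0) (h2 : iteratedDeriv 2 f z = 0) :
    ContinuousAt (signedSqrtDeriv σ f) z := by
  have hgz : signedSqrtDeriv σ f z = 0 := by simp [signedSqrtDeriv, hz, h2]
  rw [ContinuousAt, hgz, Metric.tendsto_nhds]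
  intro ε hε
  obtain ⟨δ, hδ, hM⟩ := Metric.eventually_nhds_iff.1
    ((hf.continuous_iteratedDeriv 2 le_rfl).continuousAt.eventually
      (gt_mem_nhds (show iteratedDeriv 2 f z < (ε / 2) ^ 2 by rw [h2]; positivity)))
  have hcont : Continuous fun t => 2 * √(f t) := by fun_prop
  have hsqrt : ∀ᶠ t in 𝓝 z, 2 * √(f t) < ε / 2 * (δ / 2) :=
    hcont.continuousAt.eventually
      (gt_mem_nhds (by simp only [hz, Real.sqrt_zero, mul_zero]; positivity))
  filter_upwards [Metric.ball_mem_nhds z (half_pos hδ), hsqrt] with t ht hsq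
  rw [Real.dist_eq, sub_zero]
  refine (abs_signedSqrtDeriv_le (hσ t) hf hpos (half_pos hε) hsq.le fun s hs => (hM ?_).le)
    |>.trans_lt (half_lt_self hε)
  rw [Metric.mem_ball, Real.dist_eq, abs_lt] at ht
  rw [Real.dist_eq, abs_lt]
  constructor <;> linarith [hs.1, hs.2]

theorem hasDerivAt_signedSqrt_and_continuousAt (hσ : IsSignFlipping (nondegenerateZeros f) σ)
    (hf : ContDiff ℝ 2 f) (hpos : ∀ t, 0 ≤ f t) (t : ℝ) :
    HasDerivAt (signedSqrt σ f) (signedSqrtDeriv σ f t) t ∧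
      ContinuousAt (signedSqrtDeriv σ f) t := by
  rcases (hpos t).lt_or_eq with ht | ht
  · have hσt := hσ.eventuallyEq_const <|
      (hf.continuous.continuousAt.eventually (lt_mem_nhds ht)).mono fun s hs hS => hs.ne' hS.1
    exact ⟨hasDerivAt_signedSqrt_of_pos hσt (hf.differentiable two_ne_zero t) ht,
      continuousAt_signedSqrtDeriv_of_pos hσt (hf.of_le one_le_two) ht⟩
  rcases (iteratedDeriv_two_nonneg_of_nonneg hf hpos ht.symm).lt_or_eq with h2 | h2
  · have hS : ∀ᶠ s in 𝓝[≠] t, s ∉ nondegenerateZeros f :=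
      ((tendsto_div_sq_sub hf ht.symm (deriv_eq_zero_of_nonneg hpos ht.symm)).eventually
        (lt_mem_nhds (half_pos h2))).mono fun s hs hS => by simp [hS.1] at hs
    have hσt := hσ.eventually_mul_abs_sub_eq ⟨ht.symm, h2⟩ hS
    exact ⟨hasDerivAt_signedSqrt_of_flip hf hpos ht.symm hσt,
      continuousAt_signedSqrtDeriv_of_flip hf hpos ht.symm h2 hσt⟩
  · exact ⟨hasDerivAt_signedSqrt_of_degenerate hσ.1 hf hpos ht.symm h2.symm,
      continuousAt_signedSqrtDeriv_of_degenerate hσ.1 hf hpos ht.symm h2.symm⟩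

end SignedSqrt

/-- If `f : ℝ → ℝ` is `C²` and nonnegative, then there is a global `C¹`
square root `x` with `x t ^ 2 = f t` for all `t`. -/
theorem C1_sqrt_of_C2 (f : ℝ → ℝ)
    (hf : ContDiff ℝ 2 f)
    (hpos : ∀ t, 0 ≤ f t) :
    ∃ x : ℝ → ℝ, ContDiff ℝ 1 x ∧ ∀ t, x t ^ 2 = f t := by
  obtain ⟨σ, hσ⟩ := exists_isSignFlipping (nondegenerateZeros f)
  have h := hasDerivAt_signedSqrt_and_continuousAt hσ hf hpos
  refine ⟨signedSqrt σ f, contDiff_one_iff_deriv.2 ⟨fun t => (h t).1.differentiableAt, ?_⟩,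
    fun t => sq_signedSqrt (hσ.1 t) (hpos t)⟩
  rw [funext fun t => (h t).1.deriv]
  exact continuous_iff_continuousAt.2 fun t => (h t).2
end

section
/- Multiplicity lemma: let t ↦ P(t), P(t)(x) = xⁿ + a₂(t)x^{n−2} − … + (−1)ⁿaₙ(t), be a smooth curve of monic real polynomials with all roots real, and let r be a positive integer. Then the following are equivalent: (1) a_k vanishes to order ≥ kr at t = 0 for all 2 ≤ k ≤ n; (2) a₂ vanishes to order ≥ 2r at t = 0. -/
/-!
If the roots `x₁, …, xₙ` of `P(t)` are real, then `∑ xᵢ = 0` gives `∑ xᵢ² = -2 a₂(t)`, so every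
root is at most `√(-2 a₂(t)) = O(|t|ʳ)` in absolute value and `a_k(t) = e_k(x) = O(|t|^{kr})`.
A smooth function that is `O(tᵐ)` at `0` has vanishing derivatives of order `< m` (Taylor), so it
is `tᵐ` times a continuous function.
-/

open Set Filter Topology Asymptotics Polynomial

namespace Multiset

variable {R : Type*} [CommRing R]

theorem esymm_cons_succ (a : R) (s : Multiset R) (k : ℕ) :
    (a ::ₘ s).esymm (k + 1) = s.esymm (k + 1) + a * s.esymm k := by
  simp only [esymm, powersetCard_cons, map_add, sum_add, map_map, Function.comp_def, prod_cons,
    sum_map_mul_left]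

theorem esymm_one (s : Multiset R) : s.esymm 1 = s.sum := by
  simp [esymm, powersetCard_one, map_map]

theorem sum_map_sq (s : Multiset R) : (s.map (· ^ 2)).sum = s.sum ^ 2 - 2 * s.esymm 2 := by
  induction s using Multiset.induction_on with
  | empty => simp [esymm, powersetCard_zero_right]
  | cons a s ih =>
    rw [map_cons, sum_cons, ih, sum_cons, esymm_cons_succ, esymm_one]
    ring

end Multiset

namespace Polynomial

theorem Splits.sq_le_of_mem_roots {p : ℝ[X]} (hp : p.Splits) (hm : p.Monic)
    (hnext : p.nextCoeff = 0) (hdeg : 2 ≤ p.natDegree) {x : ℝ} (hx : x ∈ p.roots) :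
    x ^ 2 ≤ -2 * p.coeff (p.natDegree - 2) := by
  have hsum : p.roots.sum = 0 := by
    simpa [hnext] using hp.nextCoeff_eq_neg_sum_roots_of_monic hm
  have hcoeff : p.coeff (p.natDegree - 2) = p.roots.esymm 2 := by
    rw [coeff_eq_esymm_roots_of_splits hp (Nat.sub_le _ _), Nat.sub_sub_self hdeg, hm.leadingCoeff]
    ring
  calc x ^ 2 ≤ (p.roots.map (· ^ 2)).sum :=
        Multiset.single_le_sum (fun y hy => by
          obtain ⟨z, -, rfl⟩ := Multiset.mem_map.mp hy; positivity) _ (Multiset.mem_map_of_mem _ hx)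
    _ = -2 * p.coeff (p.natDegree - 2) := by
        rw [Multiset.sum_map_sq, hsum, hcoeff]; ring

theorem Splits.abs_coeff_le {p : ℝ[X]} (hp : p.Splits) (hm : p.Monic)
    (hnext : p.nextCoeff = 0) (hdeg : 2 ≤ p.natDegree) (i : ℕ) :
    |p.coeff i| ≤ √(-2 * p.coeff (p.natDegree - 2)) ^ (p.natDegree - i) * p.natDegree.choose i := by
  simpa using coeff_le_of_roots_le (f := RingHom.id ℝ) i hm (by simpa using hp)
    fun x hx => Real.abs_le_sqrt (hp.sq_le_of_mem_roots hm hnext hdeg (by simpa using hx))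

end Polynomial

/-- `P(t)` at a fixed `t`, with `b k = a k t`: by Vieta, `b k` is the `k`-th elementary symmetric
function of the roots. -/
noncomputable def tschirnhausenPoly (n : ℕ) (b : ℕ → ℝ) : ℝ[X] :=
  X ^ n + ∑ k ∈ Finset.Icc 2 n, C ((-1 : ℝ) ^ k * b k) * X ^ (n - k)

namespace tschirnhausenPoly

variable (n : ℕ) (b : ℕ → ℝ)

theorem degree_sum_lt :
    (∑ k ∈ Finset.Icc 2 n, C ((-1 : ℝ) ^ k * b k) * X ^ (n - k)).degree < (n : WithBot ℕ) := by
  refine (degree_sum_le _ _).trans_lt ((Finset.sup_lt_iff (WithBot.bot_lt_coe n)).mpr ?_)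
  intro k hk
  refine (degree_C_mul_X_pow_le _ _).trans_lt ?_
  have := Finset.mem_Icc.mp hk
  exact WithBot.coe_lt_coe.mpr (show n - k < n by omega)

theorem monic : (tschirnhausenPoly n b).Monic :=
  monic_X_pow_add (degree_sum_lt n b)

theorem natDegree : (tschirnhausenPoly n b).natDegree = n :=
  natDegree_eq_of_degree_eq_some <| by
    rw [tschirnhausenPoly, degree_add_eq_left_of_degree_lt, degree_X_pow]
    rw [degree_X_pow]
    exact degree_sum_lt n b

theorem coeff_sub {j : ℕ} (hj : 0 < j) (hjn : j ≤ n) :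
    (tschirnhausenPoly n b).coeff (n - j) = if j ∈ Finset.Icc 2 n then (-1) ^ j * b j else 0 := by
  rw [tschirnhausenPoly, coeff_add, coeff_X_pow, if_neg (by omega), zero_add, finsetSum_coeff,
    ← Finset.sum_ite_eq (Finset.Icc 2 n) j fun k => (-1) ^ k * b k]
  refine Finset.sum_congr rfl fun k hk => ?_
  have := Finset.mem_Icc.mp hk
  rw [coeff_C_mul_X_pow]
  exact if_congr (by omega) rfl rfl

theorem nextCoeff (hn : 2 ≤ n) : (tschirnhausenPoly n b).nextCoeff = 0 := by
  rw [nextCoeff_of_natDegree_pos (by rw [natDegree]; omega), natDegree,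
    coeff_sub n b (by omega) (by omega), if_neg (by simp)]

theorem splits (hreal : ∀ z ∈ ((tschirnhausenPoly n b).map (algebraMap ℝ ℂ)).roots, z.im = 0) :
    (tschirnhausenPoly n b).Splits :=
  Splits.of_splits_map (algebraMap ℝ ℂ) (IsAlgClosed.splits _) fun z hz =>
    ⟨z.re, Complex.ext (by simp) (by simp [hreal z hz])⟩

theorem abs_le_sqrt_pow
    (hreal : ∀ z ∈ ((tschirnhausenPoly n b).map (algebraMap ℝ ℂ)).roots, z.im = 0)
    {k : ℕ} (hk : k ∈ Finset.Icc 2 n) : |b k| ≤ √(-2 * b 2) ^ k * n.choose k := by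
  have hkn := Finset.mem_Icc.mp hk
  have h := (splits n b hreal).abs_coeff_le (monic n b) (nextCoeff n b (by omega))
    (by rw [natDegree]; omega) (n - k)
  rwa [natDegree, coeff_sub n b (by omega) hkn.2, if_pos hk, coeff_sub n b (by omega) (by omega),
    if_pos (by simp; omega), Nat.sub_sub_self hkn.2, Nat.choose_symm hkn.2, abs_mul, abs_pow,
    abs_neg, abs_one, one_pow, one_mul, neg_one_sq, one_mul] at h

end tschirnhausenPoly

theorem taylorWithinEval_univ_zero_of_iteratedDeriv_eq_zero {f : ℝ → ℝ} {m : ℕ}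
    (h : ∀ j < m, iteratedDeriv j f 0 = 0) (x : ℝ) :
    taylorWithinEval f m univ 0 x = x ^ m * (iteratedDeriv m f 0 / m.factorial) := by
  rw [taylor_within_apply, Finset.sum_range_succ, Finset.sum_eq_zero fun j hj => by
    rw [iteratedDerivWithin_univ, h j (Finset.mem_range.mp hj), smul_zero]]
  rw [zero_add, iteratedDerivWithin_univ, sub_zero, smul_eq_mul]
  ring

theorem iteratedDeriv_eq_zero_of_isBigO_pow {f : ℝ → ℝ} {m : ℕ} (hf : ContDiff ℝ m f)
    (hfm : f =O[𝓝 0] (· ^ m)) {j : ℕ} (hj : j < m) : iteratedDeriv j f 0 = 0 := by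
  induction j using Nat.strong_induction_on with
  | _ j IH =>
  have htaylor :=
    taylor_isLittleO_univ (x₀ := 0) (hf.of_le (by exact_mod_cast hj.le) : ContDiff ℝ j f)
  simp only [sub_zero, taylorWithinEval_univ_zero_of_iteratedDeriv_eq_zero fun i hi =>
    IH i hi (hi.trans hj)] at htaylor
  -- `f = O(xᵐ) = o(xʲ)`, while Taylor says `f` is its `j`-th Taylor term up to `o(xʲ)`.
  have hsmall : (fun x => iteratedDeriv j f 0 / j.factorial * x ^ j) =o[𝓝 0] (· ^ j) :=
    ((hfm.trans_isLittleO (isLittleO_pow_pow hj)).sub htaylor).congr_left fun x => by ring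
  by_contra hc
  rw [isLittleO_const_mul_left_iff (div_ne_zero hc (by positivity))] at hsmall
  exact isLittleO_irrefl
    (eventually_nhdsWithin_of_forall (s := {0}ᶜ) fun x (hx : x ≠ 0) => pow_ne_zero j hx).frequently
    (hsmall.mono nhdsWithin_le_nhds)

theorem exists_continuous_eq_pow_mul_of_isBigO_pow {f : ℝ → ℝ} {m : ℕ} (hf : ContDiff ℝ m f)
    (hfm : f =O[𝓝 0] (· ^ m)) : ∃ g : ℝ → ℝ, Continuous g ∧ ∀ t, f t = t ^ m * g t := by
  have hlim : Tendsto (fun x => f x / x ^ m) (𝓝[≠] 0) (𝓝 (iteratedDeriv m f 0 / m.factorial)) := by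
    have h := (Real.taylor_tendsto convex_univ (mem_univ 0) hf.contDiffOn).mono_left
      (nhdsWithin_mono 0 (subset_univ {0}ᶜ))
    simp only [sub_zero, taylorWithinEval_univ_zero_of_iteratedDeriv_eq_zero fun j hj =>
      iteratedDeriv_eq_zero_of_isBigO_pow hf hfm hj] at h
    refine (zero_add (iteratedDeriv m f 0 / m.factorial) ▸ h.add_const _).congr'
      (eventually_nhdsWithin_of_forall fun x hx => ?_)
    rw [sub_div, mul_div_cancel_left₀ _ (pow_ne_zero m hx), sub_add_cancel]
  refine ⟨Function.update (fun x => f x / x ^ m) 0 (iteratedDeriv m f 0 / m.factorial),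
    continuous_iff_continuousAt.mpr fun x => ?_, fun t => ?_⟩
  · rcases eq_or_ne x 0 with rfl | hx
    · exact continuousAt_update_same.mpr hlim
    · rw [continuousAt_update_of_ne hx]
      exact hf.continuous.continuousAt.div (continuousAt_pow x m) (pow_ne_zero m hx)
  · rcases eq_or_ne t 0 with rfl | ht
    · rcases m.eq_zero_or_pos with rfl | hm
      · simp
      · simpa [zero_pow hm.ne'] using iteratedDeriv_eq_zero_of_isBigO_pow hf hfm hm
    · rw [Function.update_of_ne ht, mul_div_cancel₀ _ (pow_ne_zero m ht)]

theorem Asymptotics.IsBigO.sqrt_of_sq {α : Type*} {l : Filter α} {v w : α → ℝ}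
    (h : v =O[l] fun x => w x ^ 2) : (fun x => √(v x)) =O[l] w := by
  obtain ⟨c, hc⟩ := h.bound
  refine IsBigO.of_bound √c (hc.mono fun x hx => ?_)
  rw [Real.norm_of_nonneg (Real.sqrt_nonneg _), Real.norm_eq_abs, ← Real.sqrt_sq_eq_abs,
    ← Real.sqrt_mul' _ (sq_nonneg _)]
  exact Real.sqrt_le_sqrt ((le_abs_self _).trans (by simpa using hx))


theorem multiplicity_lemma_general (n : ℕ) (hn : 2 ≤ n) (r : ℕ)
    (a : ℕ → ℝ → ℝ)
    (ha : ∀ k ∈ Finset.Icc 2 n, ContDiff ℝ (⊤ : ℕ∞) (a k))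
    (hreal : ∀ t : ℝ, ∀ z ∈ ((X ^ n + ∑ k ∈ Finset.Icc 2 n,
        C ((-1 : ℝ) ^ k * a k t) * X ^ (n - k)).map (algebraMap ℝ ℂ)).roots, z.im = 0) :
    (∀ k ∈ Finset.Icc 2 n, ∃ g : ℝ → ℝ, Continuous g ∧ ∀ t, a k t = t ^ (k * r) * g t) ↔
    (∃ g : ℝ → ℝ, Continuous g ∧ ∀ t, a 2 t = t ^ (2 * r) * g t) := by
  refine ⟨fun h => h 2 (Finset.mem_Icc.mpr ⟨le_rfl, hn⟩), fun ⟨g, hg, ha2⟩ k hk => ?_⟩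
  have ha2O : (fun t => -2 * a 2 t) =O[𝓝 0] fun t => (t ^ r) ^ 2 := by
    have := ((isBigO_refl (fun t : ℝ => (t ^ r) ^ 2) (𝓝 0)).mul
      ((hg.continuousAt (x := 0)).isBigO_one ℝ)).const_mul_left (-2)
    simpa [ha2, ← pow_mul, mul_comm r 2] using this
  have hakO : a k =O[𝓝 0] fun t => √(-2 * a 2 t) ^ k :=
    isBigO_of_le' _ fun t => by
      rw [Real.norm_eq_abs, Real.norm_of_nonneg (by positivity), mul_comm]
      exact tschirnhausenPoly.abs_le_sqrt_pow n (a · t) (hreal t) hk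
  refine exists_continuous_eq_pow_mul_of_isBigO_pow ((ha k hk).of_le (by exact_mod_cast le_top)) ?_
  simpa [← pow_mul, mul_comm r k] using hakO.trans (ha2O.sqrt_of_sq.pow k)

/-- Multiplicity lemma 3.7: for a smooth curve
`P(t) = Xⁿ + a₂(t)X^{n-2} - a₃(t)X^{n-3} + … + (-1)ⁿ aₙ(t)` of real polynomials
with all roots real and a positive integer `r`, the coefficient `a_k` vanishes
to order `≥ k·r` at `t = 0` for all `2 ≤ k ≤ n` if and only if `a₂` vanishes to
order `≥ 2r` at `t = 0`. -/
theorem multiplicity_lemma (n : ℕ) (hn : 2 ≤ n) (r : ℕ) (hr : 0 < r)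
    (a : ℕ → ℝ → ℝ)
    (ha : ∀ k ∈ Finset.Icc 2 n, ContDiff ℝ (⊤ : ℕ∞) (a k))
    (hreal : ∀ t : ℝ, ∀ z ∈ ((X ^ n + ∑ k ∈ Finset.Icc 2 n,
        C ((-1 : ℝ) ^ k * a k t) * X ^ (n - k)).map (algebraMap ℝ ℂ)).roots, z.im = 0) :
    (∀ k ∈ Finset.Icc 2 n, ∃ g : ℝ → ℝ, Continuous g ∧ ∀ t, a k t = t ^ (k * r) * g t) ↔
    (∃ g : ℝ → ℝ, Continuous g ∧ ∀ t, a 2 t = t ^ (2 * r) * g t) :=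
  multiplicity_lemma_general n hn r a ha hreal
end
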